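/- arXiv:1305.6976 — 6 statements merged into one kernel-verified Lean document; each statement's English description precedes it below -/
import Mathlib

section
/- Suppose ε : [0,1] → ℝ is C¹ and strictly positive, u ∈ C² satisfies u(0) = u(1) = 0 and (ε u')' = εg on [0,1]. Then σ := u'' satisfies σ(x) = g(x) − (ε'(x)/ε(x)²)·( ∫₀ˣ g(t) ε(t) dt − (∫₀¹ (1/ε(s)) ∫₀ˢ g(t) ε(t) dt ds)/(∫₀¹ 1/ε(s) ds) ) for all x ∈ [0,1]. -/
/-!
Put `F = ε u'` (the flux). Integrating `F' = ε g` gives `∫₀ˣ g ε = F x - F 0`, and the boundary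
conditions give `∫₀¹ F / ε = u 1 - u 0 = 0`, which determines `F 0` as minus the `1/ε`-weighted
mean of `F - F 0`; so the bracket in the formula is exactly `F x`. Finally the product rule applied
to `ε u' = F` gives `u'' = g - ε' F / ε²`.
-/

open Set intervalIntegral

theorem integral_eq_sub_of_eqOn_deriv {f h : ℝ → ℝ} {a b : ℝ} (hf : ContDiff ℝ 1 f)
    (hfh : EqOn (deriv f) h (uIcc a b)) : ∫ t in a..b, h t = f b - f a := by
  rw [← integral_congr hfh]
  exact integral_deriv_eq_sub (fun t _ => (hf.differentiable one_ne_zero).differentiableAt)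
    (hf.continuous_deriv_one.intervalIntegrable a b)

theorem integral_inv_mul_sub_div_integral_inv {ε F : ℝ → ℝ} {a b c : ℝ} (hab : a < b)
    (hε : ContinuousOn ε (Icc a b)) (hεpos : ∀ x ∈ Icc a b, 0 < ε x)
    (hF : ContinuousOn F (Icc a b)) (hmean : ∫ s in a..b, F s / ε s = 0) :
    (∫ s in a..b, 1 / ε s * (F s - c)) / ∫ s in a..b, 1 / ε s = -c := by
  have hinv : ContinuousOn (fun s => 1 / ε s) (uIcc a b) := by
    rw [uIcc_of_lt hab]
    exact continuousOn_const.div hε fun s hs => (hεpos s hs).ne'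
  have hinv_int : IntervalIntegrable (fun s => 1 / ε s) MeasureTheory.volume a b :=
    hinv.intervalIntegrable
  have hF_int : IntervalIntegrable (fun s => 1 / ε s * F s) MeasureTheory.volume a b := by
    apply ContinuousOn.intervalIntegrable
    exact hinv.mul (by rwa [uIcc_of_lt hab])
  have hpos : 0 < ∫ s in a..b, 1 / ε s :=
    intervalIntegral_pos_of_pos_on hinv_int
      (fun s hs => one_div_pos.mpr (hεpos s (Ioo_subset_Icc_self hs))) hab
  have hsplit : (∫ s in a..b, 1 / ε s * (F s - c)) = -c * ∫ s in a..b, 1 / ε s := by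
    simp_rw [mul_sub]
    rw [integral_sub hF_int (hinv_int.mul_const c), integral_mul_const]
    simp_rw [one_div_mul_eq_div]
    rw [hmean]
    ring
  rw [hsplit, mul_div_cancel_right₀ _ hpos.ne']

theorem deriv_eq_sub_of_deriv_mul_eq {ε v : ℝ → ℝ} {x c : ℝ} (hε : DifferentiableAt ℝ ε x)
    (hv : DifferentiableAt ℝ v x) (hεx : ε x ≠ 0)
    (h : deriv (fun y => ε y * v y) x = ε x * c) :
    deriv v x = c - deriv ε x / ε x ^ 2 * (ε x * v x) := by
  rw [deriv_fun_mul hε hv] at h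
  field_simp
  linarith

/-- Resolvent formula: if `(ε u')' = ε g` on `[0,1]` with `u(0) = u(1) = 0`,
then `σ = u''` satisfies `σ = (I - R₁) g` explicitly. -/
theorem resolvent_formula_sigma (ε u g : ℝ → ℝ)
    (hε : ContDiff ℝ 1 ε) (hεpos : ∀ x ∈ Set.Icc (0:ℝ) 1, 0 < ε x)
    (hu : ContDiff ℝ 2 u) (hu0 : u 0 = 0) (hu1 : u 1 = 0)
    (hode : ∀ x ∈ Set.Icc (0:ℝ) 1, deriv (fun y => ε y * deriv u y) x = ε x * g x) :
    ∀ x ∈ Set.Icc (0:ℝ) 1,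
      deriv (deriv u) x =
        g x - (deriv ε x / (ε x) ^ 2) *
          ((∫ t in (0:ℝ)..x, g t * ε t) -
            (∫ s in (0:ℝ)..1, (1 / ε s) * ∫ t in (0:ℝ)..s, g t * ε t) /
              (∫ s in (0:ℝ)..1, 1 / ε s)) := by
  have hu' : ContDiff ℝ 1 (deriv u) := hu.deriv'
  set F := fun y => ε y * deriv u y
  have hprimitive : ∀ x ∈ Icc (0:ℝ) 1, ∫ t in (0:ℝ)..x, g t * ε t = F x - F 0 := fun x hx =>
    integral_eq_sub_of_eqOn_deriv (hε.mul hu') fun t ht => by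
      rw [uIcc_of_le hx.1] at ht
      rw [hode t ⟨ht.1, ht.2.trans hx.2⟩, mul_comm]
  have hmean : ∫ s in (0:ℝ)..1, F s / ε s = 0 := by
    have hFTC := integral_deriv_eq_sub (f := u) (a := 0) (b := 1)
      (fun t _ => (hu.differentiable two_ne_zero).differentiableAt)
      (hu'.continuous.intervalIntegrable 0 1)
    rw [hu0, hu1, sub_zero] at hFTC
    refine (integral_congr fun s hs => ?_).trans hFTC
    rw [uIcc_of_le zero_le_one] at hs
    exact mul_div_cancel_left₀ (deriv u s) (hεpos s hs).ne'
  have hweighted : ∫ s in (0:ℝ)..1, 1 / ε s * ∫ t in (0:ℝ)..s, g t * ε t =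
      ∫ s in (0:ℝ)..1, 1 / ε s * (F s - F 0) := integral_congr fun s hs => by
    rw [uIcc_of_le zero_le_one] at hs
    rw [hprimitive s hs]
  intro x hx
  rw [hweighted, integral_inv_mul_sub_div_integral_inv (F := F) zero_lt_one hε.continuous.continuousOn
    hεpos (hε.continuous.mul hu'.continuous).continuousOn hmean, hprimitive x hx, sub_neg_eq_add,
    sub_add_cancel]
  exact deriv_eq_sub_of_deriv_mul_eq (hε.differentiable one_ne_zero).differentiableAt
    (hu'.differentiable one_ne_zero).differentiableAt (hεpos x hx).ne' (hode x hx)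
end

section
/- With A₁ = I + K₁ as above, the operator norm of A₁ on C([0,1]) with the sup norm satisfies ‖A₁‖_∞ ≥ (1/4)·‖ε'/ε‖_∞ − 1. -/
/-!
Let `x₀` maximise `|ε'/ε|` on `[0, 1]`, with maximum `M`, and test `A₁` at `x₀` against a ramp
`σ` that vanishes at `x₀` and equals `sign ∂ₓG(x₀, ·)` on `[0, 1]` outside `(x₀ - δ, x₀ + δ)`.
Then `|A₁σ(x₀)| = M |∫ ∂ₓG(x₀, t) σ(t) dt|`. Away from that interval the integrand is
`|∂ₓG(x₀, t)| ≥ min t (1 - t)`, whose integral is `1/4`, and on it the integrand is at least `-1`,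
so the integral is at least `1/4 - 4δ`.
With `δ = 1 / (4M + 1)` this gives `|A₁σ(x₀)| ≥ M/4 - 1`.
-/

open MeasureTheory Set intervalIntegral

/-- `∂ₓG(x, t)` for the Green's function `G(x, t) = min x t * (max x t - 1)` of `d²/dx²` with
Dirichlet conditions on `[0, 1]`. -/
noncomputable def greenDeriv (x t : ℝ) : ℝ := if x < t then t - 1 else t

/-- Continuous stand-in for `sign (greenDeriv x ·)` on `[0, 1]`. -/
noncomputable def sgnRamp (x δ t : ℝ) : ℝ := max (-1) (min 1 ((x - t) / δ))

section Ramp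

variable {x δ t : ℝ}

theorem continuous_sgnRamp (x δ : ℝ) : Continuous (sgnRamp x δ) := by
  unfold sgnRamp
  fun_prop

theorem abs_sgnRamp_le_one (x δ t : ℝ) : |sgnRamp x δ t| ≤ 1 :=
  abs_le.2 ⟨le_max_left _ _, max_le (by norm_num) (min_le_left _ _)⟩

@[simp]
theorem sgnRamp_self (x δ : ℝ) : sgnRamp x δ x = 0 := by
  simp [sgnRamp]

theorem sgnRamp_of_le_sub (hδ : 0 < δ) (ht : t ≤ x - δ) : sgnRamp x δ t = 1 := by
  have : 1 ≤ (x - t) / δ := (one_le_div hδ).2 (by linarith)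
  simp [sgnRamp, min_eq_left this]

theorem sgnRamp_of_add_le (hδ : 0 < δ) (ht : x + δ ≤ t) : sgnRamp x δ t = -1 := by
  have : (x - t) / δ ≤ -1 := by rw [div_le_iff₀ hδ]; linarith
  simp [sgnRamp, min_eq_right (this.trans (by norm_num : (-1 : ℝ) ≤ 1)), this]

theorem abs_greenDeriv_le_one (ht : t ∈ Icc (0 : ℝ) 1) : |greenDeriv x t| ≤ 1 := by
  unfold greenDeriv
  split_ifs <;> rw [abs_le] <;> constructor <;> linarith [ht.1, ht.2]

theorem greenDeriv_eq_sub_indicator (x : ℝ) :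
    greenDeriv x = fun t ↦ t - (Ioi x).indicator (fun _ ↦ 1) t := by
  ext t
  by_cases h : x < t <;> simp [greenDeriv, h]

theorem intervalIntegrable_greenDeriv (x a b : ℝ) :
    IntervalIntegrable (greenDeriv x) volume a b := by
  rw [greenDeriv_eq_sub_indicator]
  have hmono : Monotone ((Ioi x).indicator fun _ ↦ (1 : ℝ)) := fun a b hab ↦ by
    by_cases ha : x < a
    · simp [ha, ha.trans_le hab]
    · simpa [ha] using indicator_nonneg (fun _ _ ↦ zero_le_one) b
  exact intervalIntegrable_id.sub hmono.intervalIntegrable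

theorem min_sub_indicator_le_greenDeriv_mul_sgnRamp (hδ : 0 < δ) (ht : t ∈ Icc (0 : ℝ) 1) :
    min t (1 - t) - (Ioo (x - δ) (x + δ)).indicator (fun _ ↦ 2) t ≤
      greenDeriv x t * sgnRamp x δ t := by
  have hind : 0 ≤ (Ioo (x - δ) (x + δ)).indicator (fun _ ↦ (2 : ℝ)) t :=
    indicator_nonneg (fun _ _ ↦ zero_le_two) t
  rcases le_or_gt t (x - δ) with hleft | hleft
  · rw [sgnRamp_of_le_sub hδ hleft, greenDeriv, if_neg (by linarith)]
    linarith [min_le_left t (1 - t)]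
  rcases le_or_gt (x + δ) t with hright | hright
  · rw [sgnRamp_of_add_le hδ hright, greenDeriv, if_pos (by linarith)]
    linarith [min_le_right t (1 - t)]
  have hprod : |greenDeriv x t * sgnRamp x δ t| ≤ 1 := by
    rw [abs_mul]
    exact mul_le_one₀ (abs_greenDeriv_le_one ht) (abs_nonneg _) (abs_sgnRamp_le_one x δ t)
  rw [indicator_of_mem (show t ∈ Ioo (x - δ) (x + δ) from ⟨hleft, hright⟩)]
  linarith [min_le_right t (1 - t), ht.1, neg_abs_le (greenDeriv x t * sgnRamp x δ t)]

end Ramp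

theorem integral_min_self_one_sub : ∫ t in (0 : ℝ)..1, min t (1 - t) = 1 / 4 := by
  have hcont : Continuous fun t : ℝ ↦ min t (1 - t) := by fun_prop
  have hleft : EqOn (fun t : ℝ ↦ min t (1 - t)) id (uIcc 0 (1 / 2)) := fun t ht ↦ by
    rw [uIcc_of_le (by norm_num)] at ht
    exact min_eq_left (by linarith [ht.2])
  have hright : EqOn (fun t : ℝ ↦ min t (1 - t)) (fun t ↦ 1 - t) (uIcc (1 / 2) 1) := fun t ht ↦ by
    rw [uIcc_of_le (by norm_num)] at ht
    exact min_eq_right (by linarith [ht.1])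
  rw [← integral_add_adjacent_intervals (b := 1 / 2) (hcont.intervalIntegrable _ _)
    (hcont.intervalIntegrable _ _), integral_congr hleft, integral_congr hright,
    integral_sub intervalIntegrable_const intervalIntegrable_id]
  simp only [id, integral_id, intervalIntegral.integral_const, smul_eq_mul]
  norm_num

theorem intervalIntegral_indicator_const_le {μ : Measure ℝ} {a b c : ℝ} {s : Set ℝ} (hab : a ≤ b)
    (hc : 0 ≤ c) (hs : MeasurableSet s) (hμs : μ s ≠ ⊤) :
    ∫ t in a..b, s.indicator (fun _ ↦ c) t ∂μ ≤ μ.real s * c := by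
  rw [integral_of_le hab, ← smul_eq_mul, ← integral_indicator_const c hs]
  exact setIntegral_le_integral ((integrable_indicator_iff hs).2 (integrableOn_const hμs))
    (ae_of_all _ (indicator_nonneg fun _ _ ↦ hc))

theorem le_integral_greenDeriv_mul_sgnRamp (x : ℝ) {δ : ℝ} (hδ : 0 < δ) :
    1 / 4 - 4 * δ ≤ ∫ t in (0 : ℝ)..1, greenDeriv x t * sgnRamp x δ t := by
  set e := (Ioo (x - δ) (x + δ)).indicator fun _ ↦ (2 : ℝ)
  have he : Integrable e :=
    (integrable_indicator_iff measurableSet_Ioo).2 (integrableOn_const measure_Ioo_lt_top.ne)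
  have he_le : ∫ t in (0 : ℝ)..1, e t ≤ 4 * δ :=
    calc ∫ t in (0 : ℝ)..1, e t ≤ volume.real (Ioo (x - δ) (x + δ)) * 2 :=
          intervalIntegral_indicator_const_le zero_le_one zero_le_two measurableSet_Ioo
            measure_Ioo_lt_top.ne
      _ = 4 * δ := by
          rw [Real.volume_real_Ioo_of_le (by linarith)]
          ring
  have hmin : Continuous fun t : ℝ ↦ min t (1 - t) := by fun_prop
  calc 1 / 4 - 4 * δ ≤ (∫ t in (0 : ℝ)..1, min t (1 - t)) - ∫ t in (0 : ℝ)..1, e t := by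
        rw [integral_min_self_one_sub]
        linarith
    _ = ∫ t in (0 : ℝ)..1, min t (1 - t) - e t :=
        (integral_sub (hmin.intervalIntegrable _ _) he.intervalIntegrable).symm
    _ ≤ ∫ t in (0 : ℝ)..1, greenDeriv x t * sgnRamp x δ t :=
        integral_mono_on zero_le_one ((hmin.intervalIntegrable _ _).sub he.intervalIntegrable)
          ((intervalIntegrable_greenDeriv x 0 1).mul_continuousOn
            (continuous_sgnRamp x δ).continuousOn)
          fun t ht ↦ min_sub_indicator_le_greenDeriv_mul_sgnRamp hδ ht

/-- Sup-norm lower bound for `A₁ = I + K₁`: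
`‖A₁‖_∞ ≥ (1/4)‖ε'/ε‖_∞ - 1`, i.e. for every `η > 0` there is a continuous `σ`
with `‖σ‖_∞ ≤ 1` such that `‖A₁σ‖_∞ ≥ (1/4)‖ε'/ε‖_∞ - 1 - η`. -/
theorem A1_sup_norm_lower_bound (ε : ℝ → ℝ)
    (hε : ContDiff ℝ 1 ε) (hεpos : ∀ x ∈ Set.Icc (0:ℝ) 1, 0 < ε x)
    (Gx : ℝ → ℝ → ℝ)
    (hGx : ∀ x t : ℝ, Gx x t = if x < t then t - 1 else t) :
    ∀ η > (0:ℝ), ∃ σ : ℝ → ℝ, Continuous σ ∧ (∀ y ∈ Set.Icc (0:ℝ) 1, |σ y| ≤ 1) ∧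
      ∃ x ∈ Set.Icc (0:ℝ) 1,
        (1 / 4) * (⨆ y : Set.Icc (0:ℝ) 1, |deriv ε y / ε y|) - 1 - η ≤
          |σ x + (deriv ε x / ε x) * ∫ t in (0:ℝ)..1, Gx x t * σ t| := by
  intro η _
  obtain rfl : Gx = greenDeriv := funext₂ hGx
  have hcont : ContinuousOn (fun y ↦ |deriv ε y / ε y|) (Icc 0 1) :=
    ((hε.continuous_deriv le_rfl).continuousOn.div hε.continuous.continuousOn
      fun y hy ↦ (hεpos y hy).ne').abs
  obtain ⟨x₀, hx₀, hmax⟩ := isCompact_Icc.exists_isMaxOn (nonempty_Icc.2 zero_le_one) hcont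
  rw [hmax.iSup_eq hx₀]
  set M := |deriv ε x₀ / ε x₀|
  set δ := 1 / (4 * M + 1)
  have hδ : 0 < δ := by positivity
  have hδM : 4 * δ * M ≤ 1 := by
    have : δ * (4 * M + 1) = 1 := one_div_mul_cancel (by positivity)
    linear_combination this + hδ.le
  refine ⟨sgnRamp x₀ δ, continuous_sgnRamp x₀ δ, fun y _ ↦ abs_sgnRamp_le_one x₀ δ y, x₀, hx₀, ?_⟩
  rw [sgnRamp_self, zero_add, abs_mul]
  calc 1 / 4 * M - 1 - η ≤ M * (1 / 4 - 4 * δ) := by linarith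
    _ ≤ M * ∫ t in (0 : ℝ)..1, greenDeriv x₀ t * sgnRamp x₀ δ t :=
        mul_le_mul_of_nonneg_left (le_integral_greenDeriv_mul_sgnRamp x₀ hδ) (abs_nonneg _)
    _ ≤ M * |∫ t in (0 : ℝ)..1, greenDeriv x₀ t * sgnRamp x₀ δ t| :=
        mul_le_mul_of_nonneg_left (le_abs_self _) (abs_nonneg _)
end

section
/- Let ε : [0,1] → ℝ be C¹ with 0 < m ≤ ε(x) ≤ M for all x. Then the inverse operator A₁⁻¹ = I − R₁, with R₁g(x) = (ε'(x)/ε(x)²)( ∫₀ˣ g(t)ε(t)dt − (∫₀¹ (1/ε(s)) ∫₀ˢ g(t)ε(t) dt ds)/(∫₀¹ 1/ε(s) ds) ), satisfies ‖A₁⁻¹‖_∞ ≤ 1 + ‖ε'/ε‖_∞ · (1/m)(1 + M/m)·‖ε‖₁ on C([0,1]) with the sup norm. -/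
/-!
Both terms in the bracket of `R₁g` are bounded by `‖g‖_∞ ‖ε‖₁`: the first is `∫₀ˣ g ε`
with `ε > 0`, and the second is the average of the primitive `s ↦ ∫₀ˢ g ε` against the
positive weight `1/ε`. The prefactor satisfies `|ε'/ε²| ≤ ‖ε'/ε‖_∞ / m`, and `2 ≤ 1 + M/m`.
-/

open Set intervalIntegral MeasureTheory

theorem le_ciSup_of_isCompact {α : Type*} [TopologicalSpace α] {s : Set α} (hs : IsCompact s)
    {f : α → ℝ} (hf : ContinuousOn f s) {y : α} (hy : y ∈ s) : f y ≤ ⨆ z : s, f z := by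
  have hbdd := hs.bddAbove_image hf
  rw [image_eq_range] at hbdd
  exact le_ciSup hbdd ⟨y, hy⟩

section WeightedIntegral

variable {f w : ℝ → ℝ} {a b B : ℝ}

theorem abs_integral_mul_le_mul_integral {c : ℝ} (hc : c ∈ Icc a b)
    (hfw : IntervalIntegrable (fun t => f t * w t) volume a b)
    (hw : IntervalIntegrable w volume a b) (hw0 : ∀ t ∈ Icc a b, 0 ≤ w t)
    (hf : ∀ t ∈ Icc a b, |f t| ≤ B) :
    |∫ t in a..c, f t * w t| ≤ B * ∫ t in a..b, w t :=
  calc |∫ t in a..c, f t * w t|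
      ≤ ∫ t in a..c, |f t * w t| := abs_integral_le_integral_abs hc.1
    _ ≤ ∫ t in a..b, |f t * w t| :=
        integral_mono_interval le_rfl hc.1 hc.2 (.of_forall fun _ => abs_nonneg _) hfw.abs
    _ ≤ ∫ t in a..b, B * w t := by
        refine integral_mono_on (hc.1.trans hc.2) hfw.abs (hw.const_mul B) fun t ht => ?_
        rw [abs_mul, abs_of_nonneg (hw0 t ht)]
        exact mul_le_mul_of_nonneg_right (hf t ht) (hw0 t ht)
    _ = B * ∫ t in a..b, w t := integral_const_mul B w

theorem abs_weighted_average_le (hab : a ≤ b) (hB : 0 ≤ B)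
    (hfw : IntervalIntegrable (fun t => w t * f t) volume a b)
    (hw : IntervalIntegrable w volume a b) (hw0 : ∀ t ∈ Icc a b, 0 ≤ w t)
    (hf : ∀ t ∈ Icc a b, |f t| ≤ B) :
    |(∫ t in a..b, w t * f t) / ∫ t in a..b, w t| ≤ B := by
  simp_rw [mul_comm (w _)] at hfw ⊢
  rw [abs_div, abs_of_nonneg (integral_nonneg hab hw0)]
  exact div_le_of_le_mul₀ (integral_nonneg hab hw0) hB
    (abs_integral_mul_le_mul_integral (right_mem_Icc.2 hab) hfw hw hw0 hf)

end WeightedIntegral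

theorem abs_div_sq_le_of_abs_div_le {a b K m : ℝ} (hm : 0 < m) (hb : m ≤ b)
    (h : |a / b| ≤ K) : |a / b ^ 2| ≤ K * (1 / m) := by
  have hb0 : 0 < b := hm.trans_le hb
  rw [sq, ← div_div, abs_div, abs_of_pos hb0, mul_one_div]
  calc |a / b| / b ≤ K / b := div_le_div_of_nonneg_right h hb0.le
    _ ≤ K / m := div_le_div_of_nonneg_left ((abs_nonneg _).trans h) hm hb

theorem abs_sub_mul_sub_le {u c p q G k B : ℝ} (hu : |u| ≤ G) (hc : |c| ≤ k) (hp : |p| ≤ B)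
    (hq : |q| ≤ B) : |u - c * (p - q)| ≤ G + k * (2 * B) :=
  calc |u - c * (p - q)| ≤ |u| + |c| * |p - q| := by
        rw [← abs_mul]
        exact abs_sub _ _
    _ ≤ |u| + |c| * (|p| + |q|) := by
        gcongr
        exact abs_sub _ _
    _ ≤ G + k * (B + B) := by
        gcongr
        exact (abs_nonneg _).trans hc
    _ = G + k * (2 * B) := by ring

/-- Sup-norm bound for the inverse operator `A₁⁻¹ = I - R₁`:
`‖A₁⁻¹‖_∞ ≤ 1 + ‖ε'/ε‖_∞ (1/m)(1 + M/m) ‖ε‖₁`. -/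
theorem A1_inverse_sup_norm_bound (ε : ℝ → ℝ) (m M : ℝ)
    (hε : ContDiff ℝ 1 ε) (hm : 0 < m)
    (hbounds : ∀ x ∈ Set.Icc (0:ℝ) 1, m ≤ ε x ∧ ε x ≤ M) :
    ∀ g : ℝ → ℝ, Continuous g →
      ∀ x ∈ Set.Icc (0:ℝ) 1,
        |g x - (deriv ε x / (ε x) ^ 2) *
            ((∫ t in (0:ℝ)..x, g t * ε t) -
              (∫ s in (0:ℝ)..1, (1 / ε s) * ∫ t in (0:ℝ)..s, g t * ε t) /
                (∫ s in (0:ℝ)..1, 1 / ε s))| ≤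
          (1 + (⨆ y : Set.Icc (0:ℝ) 1, |deriv ε y / ε y|) * (1 / m) * (1 + M / m) *
              ∫ t in (0:ℝ)..1, ε t) *
            ⨆ y : Set.Icc (0:ℝ) 1, |g y| := by
  intro g hg x hx
  have hεc : Continuous ε := hε.continuous
  have hεpos : ∀ y ∈ Icc (0:ℝ) 1, 0 < ε y := fun y hy => hm.trans_le (hbounds y hy).1
  have h01 : (0:ℝ) ∈ Icc (0:ℝ) 1 := left_mem_Icc.2 zero_le_one
  set K := ⨆ y : Icc (0:ℝ) 1, |deriv ε y / ε y|
  set G := ⨆ y : Icc (0:ℝ) 1, |g y|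
  set E := ∫ t in (0:ℝ)..1, ε t
  have hK : ∀ y ∈ Icc (0:ℝ) 1, |deriv ε y / ε y| ≤ K := fun y => le_ciSup_of_isCompact
    isCompact_Icc ((hε.continuous_deriv le_rfl).continuousOn.div hεc.continuousOn
      fun y hy => (hεpos y hy).ne').abs
  have hG : ∀ y ∈ Icc (0:ℝ) 1, |g y| ≤ G := fun y =>
    le_ciSup_of_isCompact isCompact_Icc hg.continuousOn.abs
  have hGE : 0 ≤ G * E := mul_nonneg ((abs_nonneg _).trans (hG 0 h01))
    (integral_nonneg zero_le_one fun t ht => (hεpos t ht).le)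
  have hF : ∀ s ∈ Icc (0:ℝ) 1, |∫ t in (0:ℝ)..s, g t * ε t| ≤ G * E := fun s hs =>
    abs_integral_mul_le_mul_integral hs ((hg.mul hεc).intervalIntegrable _ _)
      (hεc.intervalIntegrable _ _) (fun t ht => (hεpos t ht).le) hG
  have hinv : ContinuousOn (fun s => 1 / ε s) (uIcc 0 1) := by
    rw [uIcc_of_le zero_le_one]
    exact continuousOn_const.div hεc.continuousOn fun y hy => (hεpos y hy).ne'
  have hprim : Continuous fun s => ∫ t in (0:ℝ)..s, g t * ε t :=
    continuous_primitive (fun a b => (hg.mul hεc).intervalIntegrable a b) 0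
  have hAvg := abs_weighted_average_le zero_le_one hGE
    (hinv.mul hprim.continuousOn).intervalIntegrable hinv.intervalIntegrable
    (fun t ht => (one_div_pos.2 (hεpos t ht)).le) hF
  have hmM : 1 ≤ M / m := (one_le_div hm).2 ((hbounds 0 h01).1.trans (hbounds 0 h01).2)
  refine (abs_sub_mul_sub_le (hG x hx)
    (abs_div_sq_le_of_abs_div_le hm (hbounds x hx).1 (hK x hx)) (hF x hx) hAvg).trans ?_
  have hK0 : 0 ≤ K * (1 / m) := mul_nonneg ((abs_nonneg _).trans (hK 0 h01)) (by positivity)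
  nlinarith [mul_le_mul_of_nonneg_left hmM (mul_nonneg hK0 hGE)]
end

section
/- Let 1 < p < ∞ with conjugate exponent q, and let ε : [0,1] → ℝ be C¹ with 0 < m ≤ ε ≤ M. Then ‖A₁⁻¹‖_p ≤ 1 + ‖ε'/ε‖_p · (1 + M/m) · (M/m), where A₁⁻¹ = I − R₁ is the inverse of the integral operator A₁ acting on Lᵖ[0,1]. -/
/-!
Write `F x = ∫₀ˣ g ε`. Since `|ε| ≤ M` on `[0,1]`, `|F| ≤ M ‖g‖₁` there, and the constant
subtracted from `F` in `R₁ g` is an average of `F` against the positive weight `1/ε`, so it obeys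
the same bound. With `|ε'/ε²| ≤ |ε'/ε| / m` this gives `|R₁ g| ≤ 2 (M/m) ‖g‖₁ |ε'/ε|` pointwise.
Minkowski for `g - R₁ g`, Hölder's `‖g‖₁ ≤ ‖g‖_p` on the probability space `[0,1]`, and
`2 ≤ 1 + M/m` finish the proof.
-/

open MeasureTheory Set

section LpInequalities

variable {α : Type*} [MeasurableSpace α] {μ : Measure α} {p : ℝ}

theorem integral_abs_sub_rpow_rpow_le (hp : 1 ≤ p) {u v : α → ℝ}
    (hu : MemLp u (ENNReal.ofReal p) μ) (hv : MemLp v (ENNReal.ofReal p) μ) :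
    (∫ x, |u x - v x| ^ p ∂μ) ^ (1 / p) ≤
      (∫ x, |u x| ^ p ∂μ) ^ (1 / p) + (∫ x, |v x| ^ p ∂μ) ^ (1 / p) := by
  have hp0 : 0 < p := zero_lt_one.trans_le hp
  have hP0 : ENNReal.ofReal p ≠ 0 := by simpa using hp0
  have hP1 : 1 ≤ ENNReal.ofReal p := by simpa using hp
  have h := eLpNorm_sub_le hu.1 hv.1 hP1
  rw [hu.eLpNorm_eq_integral_rpow_norm hP0 ENNReal.ofReal_ne_top,
    hv.eLpNorm_eq_integral_rpow_norm hP0 ENNReal.ofReal_ne_top,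
    (hu.sub hv).eLpNorm_eq_integral_rpow_norm hP0 ENNReal.ofReal_ne_top,
    ← ENNReal.ofReal_add (by positivity) (by positivity),
    ENNReal.ofReal_le_ofReal_iff (by positivity), ENNReal.toReal_ofReal hp0.le] at h
  simpa only [Real.norm_eq_abs, Pi.sub_apply, one_div] using h

theorem integral_abs_le_integral_abs_rpow_rpow [IsProbabilityMeasure μ] (hp : 1 < p) {u : α → ℝ}
    (hu : MemLp u (ENNReal.ofReal p) μ) :
    ∫ x, |u x| ∂μ ≤ (∫ x, |u x| ^ p ∂μ) ^ (1 / p) := by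
  have h := integral_mul_le_Lp_mul_Lq_of_nonneg (Real.HolderConjugate.conjExponent hp)
    (f := fun x => |u x|) (g := fun _ => 1) (ae_of_all μ fun x => abs_nonneg (u x))
    (ae_of_all μ fun _ => zero_le_one) (by simpa only [Real.norm_eq_abs] using hu.norm)
    (memLp_const 1)
  simpa using h

theorem integral_abs_rpow_rpow_le_mul_of_ae_le (hp : 0 < p) {c : ℝ} (hc : 0 ≤ c) {v w : α → ℝ}
    (hw : Integrable (fun x => |w x| ^ p) μ) (hle : ∀ᵐ x ∂μ, |v x| ≤ c * |w x|) :
    (∫ x, |v x| ^ p ∂μ) ^ (1 / p) ≤ c * (∫ x, |w x| ^ p ∂μ) ^ (1 / p) := by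
  have hint : ∫ x, |v x| ^ p ∂μ ≤ c ^ p * ∫ x, |w x| ^ p ∂μ := by
    rw [← integral_const_mul]
    refine integral_mono_of_nonneg (ae_of_all μ fun x => by positivity) (hw.const_mul _) ?_
    filter_upwards [hle] with x hx
    rw [← Real.mul_rpow hc (abs_nonneg _)]
    exact Real.rpow_le_rpow (abs_nonneg _) hx hp.le
  calc (∫ x, |v x| ^ p ∂μ) ^ (1 / p) ≤ (c ^ p * ∫ x, |w x| ^ p ∂μ) ^ (1 / p) :=
        Real.rpow_le_rpow (integral_nonneg fun x => by positivity) hint (by positivity)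
    _ = c * (∫ x, |w x| ^ p ∂μ) ^ (1 / p) := by
        rw [Real.mul_rpow (by positivity) (integral_nonneg fun x => by positivity),
          ← Real.rpow_mul hc, mul_one_div_cancel hp.ne', Real.rpow_one]

end LpInequalities

theorem ContinuousOn.memLp_restrict_of_subset_isCompact {X E : Type*} [TopologicalSpace X]
    [MeasurableSpace X] [OpensMeasurableSpace X] [NormedAddCommGroup E] {μ : Measure X}
    [IsFiniteMeasureOnCompacts μ] {s t : Set X} {f : X → E} {p : ENNReal} (hf : ContinuousOn f s)
    (hs : IsCompact s) (ht : MeasurableSet t) (hts : t ⊆ s) : MemLp f p (μ.restrict t) := by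
  have : IsFiniteMeasure (μ.restrict t) :=
    ⟨by simpa using (measure_mono hts).trans_lt hs.measure_lt_top⟩
  obtain ⟨C, hC⟩ := hs.exists_bound_of_continuousOn hf
  exact .of_bound (hf.aestronglyMeasurable_of_subset_isCompact hs ht hts) C
    ((ae_restrict_iff' ht).2 (ae_of_all μ fun x hx => hC x (hts hx)))

section IntervalBounds

variable {a b : ℝ}

theorem abs_integral_mul_le_mul_integral_abs {x M : ℝ} {g ε : ℝ → ℝ} (hx : x ∈ Icc a b)
    (hgε : IntervalIntegrable (fun t => g t * ε t) volume a b)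
    (hg : IntervalIntegrable g volume a b) (hε : ∀ t ∈ Icc a b, |ε t| ≤ M) :
    |∫ t in a..x, g t * ε t| ≤ M * ∫ t in a..b, |g t| := by
  calc |∫ t in a..x, g t * ε t| ≤ ∫ t in a..x, |g t * ε t| :=
        intervalIntegral.abs_integral_le_integral_abs hx.1
    _ ≤ ∫ t in a..b, |g t * ε t| :=
        intervalIntegral.integral_mono_interval le_rfl hx.1 hx.2
          (ae_of_all _ fun t => abs_nonneg _) hgε.abs
    _ ≤ ∫ t in a..b, M * |g t| := by
        refine intervalIntegral.integral_mono_on (hx.1.trans hx.2) hgε.abs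
          (hg.abs.const_mul M) fun t ht => ?_
        rw [abs_mul, mul_comm]
        exact mul_le_mul_of_nonneg_right (hε t ht) (abs_nonneg _)
    _ = M * ∫ t in a..b, |g t| := intervalIntegral.integral_const_mul _ _

theorem abs_integral_mul_div_integral_le {K : ℝ} {w F : ℝ → ℝ} (hab : a ≤ b)
    (hw : IntervalIntegrable w volume a b)
    (hwF : IntervalIntegrable (fun x => w x * F x) volume a b)
    (hw0 : ∀ x ∈ Icc a b, 0 ≤ w x) (hF : ∀ x ∈ Icc a b, |F x| ≤ K) :
    |(∫ x in a..b, w x * F x) / ∫ x in a..b, w x| ≤ K := by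
  have hK : 0 ≤ K := (abs_nonneg _).trans (hF a (left_mem_Icc.2 hab))
  have hN : |∫ x in a..b, w x * F x| ≤ K * ∫ x in a..b, w x :=
    calc |∫ x in a..b, w x * F x| ≤ ∫ x in a..b, |w x * F x| :=
          intervalIntegral.abs_integral_le_integral_abs hab
      _ ≤ ∫ x in a..b, K * w x :=
          intervalIntegral.integral_mono_on hab hwF.abs (hw.const_mul K) fun x hx => by
            rw [abs_mul, abs_of_nonneg (hw0 x hx), mul_comm]
            exact mul_le_mul_of_nonneg_right (hF x hx) (hw0 x hx)
      _ = K * ∫ x in a..b, w x := intervalIntegral.integral_const_mul _ _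
  rw [abs_div, abs_of_nonneg (intervalIntegral.integral_nonneg hab hw0)]
  exact div_le_of_le_mul₀ (intervalIntegral.integral_nonneg hab hw0) hK hN

end IntervalBounds

noncomputable def R₁ (ε g : ℝ → ℝ) (x : ℝ) : ℝ :=
  deriv ε x / (ε x) ^ 2 *
    ((∫ t in (0:ℝ)..x, g t * ε t) -
      (∫ s in (0:ℝ)..1, (1 / ε s) * ∫ t in (0:ℝ)..s, g t * ε t) / (∫ s in (0:ℝ)..1, 1 / ε s))

section R₁

variable {ε g : ℝ → ℝ} {m M : ℝ}

theorem continuousOn_R₁ (hε : ContDiff ℝ 1 ε) (hg : Continuous g)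
    (hε0 : ∀ x ∈ Icc (0:ℝ) 1, ε x ≠ 0) : ContinuousOn (R₁ ε g) (Icc 0 1) := by
  have hF : Continuous fun x => ∫ t in (0:ℝ)..x, g t * ε t :=
    intervalIntegral.continuous_primitive
      (fun a b => (hg.mul hε.continuous).intervalIntegrable a b) 0
  exact ((hε.continuous_deriv le_rfl).continuousOn.div (hε.continuous.pow 2).continuousOn
    fun x hx => pow_ne_zero 2 (hε0 x hx)).mul (hF.continuousOn.sub continuousOn_const)

theorem abs_R₁_le (hε : Continuous ε) (hg : Continuous g) (hm : 0 < m)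
    (hbounds : ∀ x ∈ Icc (0:ℝ) 1, m ≤ ε x ∧ ε x ≤ M) {x : ℝ} (hx : x ∈ Icc (0:ℝ) 1) :
    |R₁ ε g x| ≤ 2 * (M / m) * (∫ t in (0:ℝ)..1, |g t|) * |deriv ε x / ε x| := by
  have hpos : ∀ y ∈ Icc (0:ℝ) 1, 0 < ε y := fun y hy => hm.trans_le (hbounds y hy).1
  have hFcont : Continuous fun y => ∫ t in (0:ℝ)..y, g t * ε t :=
    intervalIntegral.continuous_primitive
      (fun a b => (hg.mul hε).intervalIntegrable a b) 0
  have hinv : ContinuousOn (fun s => 1 / ε s) (uIcc 0 1) := by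
    rw [uIcc_of_le zero_le_one]
    exact continuousOn_const.div hε.continuousOn fun y hy => (hpos y hy).ne'
  have hF : ∀ y ∈ Icc (0:ℝ) 1, |∫ t in (0:ℝ)..y, g t * ε t| ≤ M * ∫ t in (0:ℝ)..1, |g t| :=
    fun y hy => abs_integral_mul_le_mul_integral_abs hy ((hg.mul hε).intervalIntegrable 0 1)
      (hg.intervalIntegrable 0 1) fun t ht => by
        rw [abs_of_pos (hpos t ht)]; exact (hbounds t ht).2
  have havg := abs_integral_mul_div_integral_le zero_le_one hinv.intervalIntegrable
    (hinv.mul hFcont.continuousOn).intervalIntegrable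
    (fun y hy => (one_div_pos.2 (hpos y hy)).le) hF
  have hdiff := (abs_sub _ _).trans (add_le_add (hF x hx) havg)
  have hcoef : |deriv ε x / ε x ^ 2| ≤ |deriv ε x / ε x| / m := by
    rw [sq, ← div_div, abs_div _ (ε x), abs_of_pos (hpos x hx)]
    exact div_le_div_of_nonneg_left (abs_nonneg _) hm (hbounds x hx).1
  calc |R₁ ε g x| ≤ |deriv ε x / ε x| / m * (M * (∫ t in (0:ℝ)..1, |g t|) +
        M * ∫ t in (0:ℝ)..1, |g t|) := by
        rw [R₁, abs_mul]
        exact mul_le_mul hcoef hdiff (abs_nonneg _) (by positivity)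
    _ = 2 * (M / m) * (∫ t in (0:ℝ)..1, |g t|) * |deriv ε x / ε x| := by ring

theorem integral_abs_R₁_rpow_rpow_le (hε : ContDiff ℝ 1 ε) (hg : Continuous g) (hm : 0 < m)
    (hbounds : ∀ x ∈ Icc (0:ℝ) 1, m ≤ ε x ∧ ε x ≤ M) {p : ℝ} (hp : 0 < p) (hmM : m ≤ M) :
    (∫ x in Ioc 0 1, |R₁ ε g x| ^ p) ^ (1 / p) ≤ 2 * (M / m) * (∫ x in Ioc 0 1, |g x|) *
      (∫ x in Ioc 0 1, |deriv ε x / ε x| ^ p) ^ (1 / p) := by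
  have hε0 : ∀ x ∈ Icc (0:ℝ) 1, ε x ≠ 0 := fun x hx => (hm.trans_le (hbounds x hx).1).ne'
  have hlog : Integrable (fun x => |deriv ε x / ε x| ^ p) (volume.restrict (Ioc 0 1)) :=
    (((hε.continuous_deriv le_rfl).continuousOn.div hε.continuous.continuousOn hε0).abs.rpow_const
      fun _ _ => Or.inr hp.le).integrableOn_compact isCompact_Icc |>.mono_set Ioc_subset_Icc_self
  have hM : 0 < M := hm.trans_le hmM
  refine integral_abs_rpow_rpow_le_mul_of_ae_le hp (by positivity) hlog
    ((ae_restrict_iff' measurableSet_Ioc).2 (ae_of_all _ fun x hx => ?_))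
  simpa only [intervalIntegral.integral_of_le zero_le_one] using
    abs_R₁_le hε.continuous hg hm hbounds (Ioc_subset_Icc_self hx)

end R₁

/-- `Lᵖ` bound for the inverse operator `A₁⁻¹ = I - R₁` for `1 < p < ∞`:
`‖A₁⁻¹g‖_p ≤ (1 + ‖ε'/ε‖_p (1 + M/m)(M/m)) ‖g‖_p`. -/
theorem A1_inverse_Lp_norm_bound (ε : ℝ → ℝ) (p : ℝ) (hp : 1 < p) (m M : ℝ)
    (hε : ContDiff ℝ 1 ε) (hm : 0 < m)
    (hbounds : ∀ x ∈ Set.Icc (0:ℝ) 1, m ≤ ε x ∧ ε x ≤ M) :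
    ∀ g : ℝ → ℝ, Continuous g →
      (∫ x in (0:ℝ)..1,
          |g x - (deriv ε x / (ε x) ^ 2) *
            ((∫ t in (0:ℝ)..x, g t * ε t) -
              (∫ s in (0:ℝ)..1, (1 / ε s) * ∫ t in (0:ℝ)..s, g t * ε t) /
                (∫ s in (0:ℝ)..1, 1 / ε s))| ^ p) ^ (1 / p) ≤
        (1 + (∫ x in (0:ℝ)..1, |deriv ε x / ε x| ^ p) ^ (1 / p) * (1 + M / m) * (M / m)) *
          (∫ x in (0:ℝ)..1, |g x| ^ p) ^ (1 / p) := by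
  intro g hg
  change (∫ x in (0:ℝ)..1, |g x - R₁ ε g x| ^ p) ^ (1 / p) ≤ _
  simp only [intervalIntegral.integral_of_le zero_le_one]
  have : IsProbabilityMeasure (volume.restrict (Ioc (0:ℝ) 1)) := ⟨by simp⟩
  have hmM : m ≤ M := (hbounds 0 (left_mem_Icc.2 zero_le_one)).1.trans
    (hbounds 0 (left_mem_Icc.2 zero_le_one)).2
  have hgLp : MemLp g (ENNReal.ofReal p) (volume.restrict (Ioc 0 1)) :=
    hg.continuousOn.memLp_restrict_of_subset_isCompact isCompact_Icc measurableSet_Ioc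
      Ioc_subset_Icc_self
  have hRLp : MemLp (R₁ ε g) (ENNReal.ofReal p) (volume.restrict (Ioc 0 1)) :=
    (continuousOn_R₁ hε hg fun x hx => (hm.trans_le (hbounds x hx).1).ne')
      |>.memLp_restrict_of_subset_isCompact isCompact_Icc measurableSet_Ioc Ioc_subset_Icc_self
  calc _ ≤ (∫ x in Ioc 0 1, |g x| ^ p) ^ (1 / p) + (∫ x in Ioc 0 1, |R₁ ε g x| ^ p) ^ (1 / p) :=
        integral_abs_sub_rpow_rpow_le hp.le hgLp hRLp
    _ ≤ (∫ x in Ioc 0 1, |g x| ^ p) ^ (1 / p) + 2 * (M / m) * (∫ x in Ioc 0 1, |g x|) *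
          (∫ x in Ioc 0 1, |deriv ε x / ε x| ^ p) ^ (1 / p) := by
        gcongr
        exact integral_abs_R₁_rpow_rpow_le hε hg hm hbounds (zero_lt_one.trans hp) hmM
    _ ≤ (∫ x in Ioc 0 1, |g x| ^ p) ^ (1 / p) + (1 + M / m) * (M / m) *
          (∫ x in Ioc 0 1, |g x| ^ p) ^ (1 / p) *
          (∫ x in Ioc 0 1, |deriv ε x / ε x| ^ p) ^ (1 / p) := by
        have hM : 0 < M := hm.trans_le hmM
        have : 2 ≤ 1 + M / m := by linarith [(one_le_div hm).2 hmM]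
        gcongr
        exact integral_abs_le_integral_abs_rpow_rpow hp hgLp
    _ = _ := by ring
end

section
/- For ε_δ(x) = 2 + tanh(δ(x−x₀)) on [0,2] with δ ≥ 10, x₀ ∈ (1/10, 19/10), and 1 ≤ p < ∞, there is a constant C(p) > 0 independent of δ such that ‖ε_δ'‖_p ≥ C(p) · δ^{1−1/p}. -/
/-!
Where |x - x₀| ≤ 1/δ one has cosh (δ (x - x₀)) ≤ cosh 1 < 2, so ε_δ' = δ sech² (δ (x - x₀)) ≥ δ/4.
The window [x₀, x₀ + 1/δ] lies in [0, 2], hence ∫₀² |ε_δ'|^p ≥ δ⁻¹ (δ/4)^p, and taking p-th roots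
gives the bound with C = 1/4.
-/

open Real Set

theorem Real.hasDerivAt_tanh (x : ℝ) : HasDerivAt tanh (1 / cosh x ^ 2) x := by
  have h := (hasDerivAt_sinh x).div (hasDerivAt_cosh x) (cosh_pos x).ne'
  rw [← sq, ← sq, cosh_sq_sub_sinh_sq] at h
  rwa [show tanh = sinh / cosh from funext tanh_eq_sinh_div_cosh]

theorem hasDerivAt_const_add_tanh_mul_sub (c δ x₀ x : ℝ) :
    HasDerivAt (fun x => c + tanh (δ * (x - x₀))) (δ / cosh (δ * (x - x₀)) ^ 2) x := by
  have hlin : HasDerivAt (fun x => δ * (x - x₀)) δ x := by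
    simpa using ((hasDerivAt_id x).sub_const x₀).const_mul δ
  have h := ((hasDerivAt_tanh (δ * (x - x₀))).comp x hlin).const_add c
  rwa [one_div_mul_eq_div] at h

theorem Real.cosh_one_lt_two : cosh 1 < 2 := by
  have he := exp_one_lt_d9
  have hinv : exp (-1) ≤ 1 := exp_le_one_iff.mpr (by norm_num)
  rw [cosh_eq]
  linarith

theorem Real.cosh_sq_le_four_of_abs_le_one {t : ℝ} (ht : |t| ≤ 1) : cosh t ^ 2 ≤ 4 := by
  have hle : cosh t ≤ 2 :=
    (cosh_le_cosh.mpr (by rwa [abs_one])).trans cosh_one_lt_two.le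
  nlinarith [cosh_pos t]

theorem mul_le_integral_of_le_on_Icc {g : ℝ → ℝ} {a b c d m : ℝ} (hca : c ≤ a) (hab : a ≤ b)
    (hbd : b ≤ d) (hg0 : ∀ x, 0 ≤ g x) (hg : IntervalIntegrable g MeasureTheory.volume c d)
    (hm : ∀ x ∈ Icc a b, m ≤ g x) : (b - a) * m ≤ ∫ x in c..d, g x :=
  calc (b - a) * m = ∫ _ in a..b, m := by simp
    _ ≤ ∫ x in a..b, g x :=
      intervalIntegral.integral_mono_on hab intervalIntegrable_const
        (hg.mono_set (by
          rw [uIcc_of_le hab, uIcc_of_le (hca.trans (hab.trans hbd))]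
          exact Icc_subset_Icc hca hbd)) hm
    _ ≤ ∫ x in c..d, g x :=
      intervalIntegral.integral_mono_interval hca hab hbd (.of_forall hg0) hg

theorem inv_mul_div_rpow_rpow_one_div {δ a p : ℝ} (hδ : 0 < δ) (ha : 0 < a) (hp : p ≠ 0) :
    (δ⁻¹ * (δ / a) ^ p) ^ (1 / p) = a⁻¹ * δ ^ (1 - 1 / p) := by
  rw [mul_rpow (by positivity) (by positivity), one_div, rpow_rpow_inv (by positivity) hp,
    rpow_sub hδ, rpow_one, inv_rpow hδ.le]
  field_simp

theorem div_four_le_abs_deriv_const_add_tanh_mul_sub {c δ x₀ x : ℝ} (hδ : 0 < δ)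
    (hx : |x - x₀| ≤ δ⁻¹) : δ / 4 ≤ |deriv (fun x => c + tanh (δ * (x - x₀))) x| := by
  rw [(hasDerivAt_const_add_tanh_mul_sub c δ x₀ x).deriv, abs_of_pos (by positivity)]
  have hscaled : |δ * (x - x₀)| ≤ 1 := by
    rw [abs_mul, abs_of_pos hδ, ← mul_inv_cancel₀ hδ.ne']
    exact mul_le_mul_of_nonneg_left hx hδ.le
  exact div_le_div_of_nonneg_left hδ.le (by positivity) (cosh_sq_le_four_of_abs_le_one hscaled)

/-- Lower bound on the `Lᵖ` norm of `ε_δ'`: there is `C(p) > 0`, independent of `δ`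
and `x₀`, with `‖ε_δ'‖_p ≥ C(p) δ^(1-1/p)` for all `δ ≥ 10` and
`x₀ ∈ (1/10, 19/10)`. -/
theorem eps_delta_deriv_Lp_lower (p : ℝ) (hp : 1 ≤ p) :
    ∃ C > (0:ℝ), ∀ δ x₀ : ℝ, 10 ≤ δ → x₀ ∈ Set.Ioo (1/10 : ℝ) (19/10) →
      ∀ ε : ℝ → ℝ, (∀ x, ε x = 2 + Real.tanh (δ * (x - x₀))) →
        C * δ ^ (1 - 1 / p) ≤ (∫ x in (0:ℝ)..2, |deriv ε x| ^ p) ^ (1 / p) := by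
  refine ⟨4⁻¹, by norm_num, fun δ x₀ hδ hx₀ ε hε => ?_⟩
  obtain rfl : ε = fun x => 2 + tanh (δ * (x - x₀)) := funext hε
  have hδ0 : 0 < δ := by linarith
  have hp0 : 0 < p := by linarith
  have hδinv : δ⁻¹ ≤ 10⁻¹ := inv_anti₀ (by norm_num) hδ
  have hcont : Continuous fun x => |deriv (fun x => 2 + tanh (δ * (x - x₀))) x| ^ p := by
    rw [funext fun x => (hasDerivAt_const_add_tanh_mul_sub 2 δ x₀ x).deriv]
    exact ((continuous_const.div (by fun_prop) fun x => by positivity).abs).rpow_const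
      fun _ => Or.inr hp0.le
  have hwindow : ∀ x ∈ Icc x₀ (x₀ + δ⁻¹),
      (δ / 4) ^ p ≤ |deriv (fun x => 2 + tanh (δ * (x - x₀))) x| ^ p := fun x hx =>
    rpow_le_rpow (by positivity) (div_four_le_abs_deriv_const_add_tanh_mul_sub hδ0
      (abs_le.mpr ⟨by linarith [hx.1, inv_pos.mpr hδ0], by linarith [hx.2]⟩)) hp0.le
  have hbound := mul_le_integral_of_le_on_Icc (by linarith [hx₀.1])
    (le_add_of_nonneg_right (inv_pos.mpr hδ0).le) (by linarith [hx₀.2]) (fun x => by positivity)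
    (hcont.intervalIntegrable 0 2) hwindow
  rw [add_sub_cancel_left] at hbound
  calc 4⁻¹ * δ ^ (1 - 1 / p) = (δ⁻¹ * (δ / 4) ^ p) ^ (1 / p) :=
        (inv_mul_div_rpow_rpow_one_div hδ0 (by norm_num) hp0.ne').symm
    _ ≤ _ := rpow_le_rpow (by positivity) hbound (by positivity)
end

section
/- Let ε : [0,1] → ℝ be C¹ and strictly positive, f continuous, and let u(x) := ∫₀¹ G(x,t) σ(t) dt where σ is continuous and satisfies σ(x) + (ε'(x)/ε(x)) ∫₀¹ G_x(x,t) σ(t) dt = f(x)/ε(x) for all x. Then u(0) = u(1) = 0 and (ε u')' = f on (0,1). -/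
/-!
Splitting `∫₀¹` at `t = x` writes `u` as `(x - 1) ∫₀ˣ tσ + x ∫ₓ¹ (t - 1)σ`, which vanishes at both
ends. By the fundamental theorem of calculus the boundary terms cancel when differentiating, so
`u' = ∫₀ˣ tσ + ∫ₓ¹ (t - 1)σ = ∫₀¹ G_x σ` and `u'' = σ`. Hence `(ε u')' = ε' ∫₀¹ G_x σ + ε σ`,
which is `f` by the integral equation multiplied by `ε`.
-/

open MeasureTheory Set Filter Topology intervalIntegral
open scoped Interval

theorem intervalIntegral.integral_ite_lt {g h : ℝ → ℝ} (hg : Continuous g) (hh : Continuous h)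
    {a b x : ℝ} (hax : a ≤ x) (hxb : x ≤ b) :
    ∫ t in a..b, (if x < t then g t else h t) = (∫ t in a..x, h t) + ∫ t in x..b, g t := by
  have below : ∀ᵐ t, t ∈ Ι a x → (if x < t then g t else h t) = h t :=
    ae_of_all _ fun t ht => by
      rw [uIoc_of_le hax] at ht
      exact if_neg (not_lt.2 ht.2)
  have above : ∀ᵐ t, t ∈ Ι x b → (if x < t then g t else h t) = g t :=
    ae_of_all _ fun t ht => by
      rw [uIoc_of_le hxb] at ht
      exact if_pos ht.1
  have int_below : IntervalIntegrable (fun t => if x < t then g t else h t) volume a x :=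
    (hh.intervalIntegrable a x).congr_ae ((ae_restrict_iff' measurableSet_uIoc).2 <|
      below.mono fun _ ht hmem => (ht hmem).symm)
  have int_above : IntervalIntegrable (fun t => if x < t then g t else h t) volume x b :=
    (hg.intervalIntegrable x b).congr_ae ((ae_restrict_iff' measurableSet_uIoc).2 <|
      above.mono fun _ ht hmem => (ht hmem).symm)
  rw [← integral_add_adjacent_intervals int_below int_above, integral_congr_ae below,
    integral_congr_ae above]

theorem Continuous.hasDerivAt_integral_lower {g : ℝ → ℝ} (hg : Continuous g) (x b : ℝ) :
    HasDerivAt (fun y => ∫ t in y..b, g t) (-g x) x :=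
  integral_hasDerivAt_left (hg.intervalIntegrable x b) (hg.stronglyMeasurableAtFilter _ _)
    hg.continuousAt

noncomputable def green (x t : ℝ) : ℝ := if x < t then x * (t - 1) else t * (x - 1)

noncomputable def greenDx (x t : ℝ) : ℝ := if x < t then t - 1 else t

noncomputable def greenPotential (σ : ℝ → ℝ) (x : ℝ) : ℝ :=
  (x - 1) * (∫ t in (0:ℝ)..x, t * σ t) + x * ∫ t in x..1, (t - 1) * σ t

noncomputable def greenFlux (σ : ℝ → ℝ) (x : ℝ) : ℝ :=
  (∫ t in (0:ℝ)..x, t * σ t) + ∫ t in x..1, (t - 1) * σ t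

section

variable {σ : ℝ → ℝ}

theorem integral_green_mul (hσ : Continuous σ) {x : ℝ} (hx : x ∈ Icc (0:ℝ) 1) :
    ∫ t in (0:ℝ)..1, green x t * σ t = greenPotential σ x := by
  have hpiece : (fun t => green x t * σ t) =
      fun t => if x < t then x * ((t - 1) * σ t) else (x - 1) * (t * σ t) := by
    funext t
    unfold green
    split_ifs <;> ring
  rw [hpiece, integral_ite_lt (by fun_prop) (by fun_prop) hx.1 hx.2,
    intervalIntegral.integral_const_mul, intervalIntegral.integral_const_mul, greenPotential]

theorem integral_greenDx_mul (hσ : Continuous σ) {x : ℝ} (hx : x ∈ Icc (0:ℝ) 1) :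
    ∫ t in (0:ℝ)..1, greenDx x t * σ t = greenFlux σ x := by
  have hpiece : (fun t => greenDx x t * σ t) =
      fun t => if x < t then (t - 1) * σ t else t * σ t := by
    funext t
    unfold greenDx
    split_ifs <;> rfl
  rw [hpiece, integral_ite_lt (by fun_prop) (by fun_prop) hx.1 hx.2, greenFlux]

theorem greenPotential_zero : greenPotential σ 0 = 0 := by
  simp [greenPotential]

theorem greenPotential_one : greenPotential σ 1 = 0 := by
  simp [greenPotential]

theorem hasDerivAt_greenPotential (hσ : Continuous σ) (x : ℝ) :
    HasDerivAt (greenPotential σ) (greenFlux σ x) x := by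
  have hA : HasDerivAt (fun y => ∫ t in (0:ℝ)..y, t * σ t) (x * σ x) x :=
    ((continuous_id.mul hσ).integral_hasStrictDerivAt 0 x).hasDerivAt
  have hB : HasDerivAt (fun y => ∫ t in y..1, (t - 1) * σ t) (-((x - 1) * σ x)) x :=
    ((continuous_id.sub continuous_const).mul hσ).hasDerivAt_integral_lower x 1
  exact ((((hasDerivAt_id' x).sub_const 1).mul hA).add ((hasDerivAt_id' x).mul hB)).congr_deriv
    (by rw [greenFlux]; ring)

theorem hasDerivAt_greenFlux (hσ : Continuous σ) (x : ℝ) :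
    HasDerivAt (greenFlux σ) (σ x) x := by
  have hA : HasDerivAt (fun y => ∫ t in (0:ℝ)..y, t * σ t) (x * σ x) x :=
    ((continuous_id.mul hσ).integral_hasStrictDerivAt 0 x).hasDerivAt
  have hB : HasDerivAt (fun y => ∫ t in y..1, (t - 1) * σ t) (-((x - 1) * σ x)) x :=
    ((continuous_id.sub continuous_const).mul hσ).hasDerivAt_integral_lower x 1
  exact (hA.add hB).congr_deriv (by ring)

end

theorem integral_representation_solves_bvp_general (ε f σ : ℝ → ℝ)
    (hε : ContDiff ℝ 1 ε) (hεpos : ∀ x ∈ Set.Icc (0:ℝ) 1, 0 < ε x)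
    (hσ : Continuous σ)
    (G Gx : ℝ → ℝ → ℝ)
    (hG : ∀ x t : ℝ, G x t = if x < t then x * (t - 1) else t * (x - 1))
    (hGx : ∀ x t : ℝ, Gx x t = if x < t then t - 1 else t)
    (hinteq : ∀ x ∈ Set.Icc (0:ℝ) 1,
      σ x + (deriv ε x / ε x) * (∫ t in (0:ℝ)..1, Gx x t * σ t) = f x / ε x)
    (u : ℝ → ℝ) (hu : ∀ x, u x = ∫ t in (0:ℝ)..1, G x t * σ t) :
    u 0 = 0 ∧ u 1 = 0 ∧
      ∀ x ∈ Set.Ioo (0:ℝ) 1, deriv (fun y => ε y * deriv u y) x = f x := by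
  obtain rfl : G = green := funext₂ hG
  obtain rfl : Gx = greenDx := funext₂ hGx
  have hu_eq : EqOn u (greenPotential σ) (Icc 0 1) := fun y hy => by
    rw [hu, integral_green_mul hσ hy]
  refine ⟨(hu_eq (left_mem_Icc.2 zero_le_one)).trans greenPotential_zero,
    (hu_eq (right_mem_Icc.2 zero_le_one)).trans greenPotential_one,
    fun x hx => ?_⟩
  have hderiv_u : EqOn (deriv u) (greenFlux σ) (Ioo 0 1) := fun y hy =>
    ((hasDerivAt_greenPotential hσ y).congr_of_eventuallyEq <|
      eventually_of_mem (isOpen_Ioo.mem_nhds hy) fun z hz => hu_eq (Ioo_subset_Icc_self hz)).deriv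
  have hflux : (fun y => ε y * deriv u y) =ᶠ[𝓝 x] fun y => ε y * greenFlux σ y :=
    eventually_of_mem (isOpen_Ioo.mem_nhds hx) fun y hy => congrArg (ε y * ·) (hderiv_u hy)
  have hprod : HasDerivAt (fun y => ε y * greenFlux σ y)
      (deriv ε x * greenFlux σ x + ε x * σ x) x :=
    (hε.differentiable one_ne_zero x).hasDerivAt.mul (hasDerivAt_greenFlux hσ x)
  rw [hflux.deriv_eq, hprod.deriv]
  have hxI := Ioo_subset_Icc_self hx
  have heq := hinteq x hxI
  rw [integral_greenDx_mul hσ hxI] at heq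
  field_simp [(hεpos x hxI).ne'] at heq
  linarith

/-- If `σ` solves the second-kind integral equation
`σ(x) + (ε'(x)/ε(x)) ∫₀¹ G_x(x,t) σ(t) dt = f(x)/ε(x)`, then
`u(x) = ∫₀¹ G(x,t) σ(t) dt` satisfies `u(0) = u(1) = 0` and `(ε u')' = f` on `(0,1)`. -/
theorem integral_representation_solves_bvp (ε f σ : ℝ → ℝ)
    (hε : ContDiff ℝ 1 ε) (hεpos : ∀ x ∈ Set.Icc (0:ℝ) 1, 0 < ε x)
    (hf : Continuous f) (hσ : Continuous σ)
    (G Gx : ℝ → ℝ → ℝ)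
    (hG : ∀ x t : ℝ, G x t = if x < t then x * (t - 1) else t * (x - 1))
    (hGx : ∀ x t : ℝ, Gx x t = if x < t then t - 1 else t)
    (hinteq : ∀ x ∈ Set.Icc (0:ℝ) 1,
      σ x + (deriv ε x / ε x) * (∫ t in (0:ℝ)..1, Gx x t * σ t) = f x / ε x)
    (u : ℝ → ℝ) (hu : ∀ x, u x = ∫ t in (0:ℝ)..1, G x t * σ t) :
    u 0 = 0 ∧ u 1 = 0 ∧
      ∀ x ∈ Set.Ioo (0:ℝ) 1, deriv (fun y => ε y * deriv u y) x = f x :=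
  integral_representation_solves_bvp_general ε f σ hε hεpos hσ G Gx hG hGx hinteq u hu
end
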